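/- The samples of the PBL signal are uniquely identifiable up to an integer constant vector from the modulo samples if and only if for every divisor d of N with d > 1, there exists n with P+1 ≤ n ≤ N−P−1 such that exp(2πi·n/N) is a root of the d-th cyclotomic polynomial Φ_d (equivalently, exp(2πi·n/N) is a primitive d-th root of unity). -/

import Mathlib

/-!
Write `ω = exp (2πi / N)` and `Y k = ∑ₙ yₙ ω^{-nk}` for the DFT of a sample vector. By Fourier
inversion, and because `p ↦ p mod N` maps `[-P, P]` onto the residues outside the gap
`P < k < N - P`, a real vector is a PBL sample vector iff its DFT vanishes on the gap.

For an integer vector `a`, `Y k` is the value of `∑ₙ aₙ Xⁿ ∈ ℤ[X]` at `ω^{-k}`, and an integer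
polynomial vanishing at one primitive `d`-th root of unity vanishes at all of them (they share the
minimal polynomial `Φ_d`). So if every `d ∣ N`, `d > 1`, is the order of some `ω^n` with `n` in
the gap, the DFT of an integer PBL vector vanishes at every `k ≢ 0`, and the vector is constant.
Conversely, if no such `n` exists for some `d`, the coefficients of `(Xᴺ - 1) / Φ_d` form an
integer PBL vector whose DFT does not vanish at the frequencies of order `d`, so it is not
constant.
-/

open Polynomial

/-- `y : Fin N → ℝ` is a length-`N` sample vector of a periodic bandlimited signal with
`P` harmonics: `y n = ∑_{p=-P}^{P} c p · exp(2πi·n·p/N)` with `c (-p) = conj (c p)`. -/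
def IsPBLSample (P N : ℕ) (y : Fin N → ℝ) : Prop :=
  ∃ c : ℤ → ℂ, (∀ p : ℤ, c (-p) = (starRingEnd ℂ) (c p)) ∧
    ∀ n : Fin N, (y n : ℂ) =
      ∑ p ∈ Finset.Icc (-(P : ℤ)) (P : ℤ),
        c p * Complex.exp (2 * Real.pi * Complex.I * (n : ℕ) * p / N)

/-- The samples of the PBL signal are uniquely identifiable up to an integer constant
vector from the modulo samples: any two PBL sample vectors differing by an integer
vector differ by a constant integer vector. -/
def PBLIdentifiable (P N : ℕ) : Prop :=
  ∀ y y' : Fin N → ℝ, IsPBLSample P N y → IsPBLSample P N y' →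
    (∀ n : Fin N, ∃ k : ℤ, y n - y' n = k) →
    ∃ c : ℤ, ∀ n : Fin N, y n - y' n = c

open Finset Complex

noncomputable def unitRoot (N : ℕ) : ℂ := exp (2 * Real.pi * I / N)

section RootOfUnity

variable {N : ℕ}

lemma isPrimitiveRoot_unitRoot (hN : N ≠ 0) : IsPrimitiveRoot (unitRoot N) N :=
  isPrimitiveRoot_exp N hN

lemma exp_eq_unitRoot_zpow (m : ℤ) : exp (2 * Real.pi * I * m / N) = unitRoot N ^ m := by
  rw [unitRoot, ← exp_int_mul]
  ring_nf

lemma exp_eq_unitRoot_pow (n : ℕ) : exp (2 * Real.pi * I * n / N) = unitRoot N ^ n := by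
  simpa using exp_eq_unitRoot_zpow (N := N) n

lemma unitRoot_ne_zero : unitRoot N ≠ 0 := exp_ne_zero _

lemma unitRoot_zpow_add_mul (m k : ℤ) : unitRoot N ^ (m + N * k) = unitRoot N ^ m := by
  rcases eq_or_ne N 0 with rfl | hN
  · simp
  rw [zpow_add₀ unitRoot_ne_zero, zpow_mul, zpow_natCast,
    (isPrimitiveRoot_unitRoot hN).pow_eq_one, one_zpow, mul_one]

lemma unitRoot_zpow_pow_eq_one (m : ℤ) : (unitRoot N ^ m) ^ N = 1 := by
  rw [← zpow_natCast, ← zpow_mul, ← zero_add (m * N), mul_comm, unitRoot_zpow_add_mul, zpow_zero]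

lemma conj_unitRoot_zpow (hN : N ≠ 0) (m : ℤ) :
    starRingEnd ℂ (unitRoot N ^ m) = unitRoot N ^ (-m) := by
  rw [map_zpow₀, ← inv_eq_conj ((isPrimitiveRoot_unitRoot hN).norm'_eq_one hN), inv_zpow',
    zpow_neg]

lemma sum_range_unitRoot_zpow (hN : N ≠ 0) {m : ℤ} (hm : |m| < N) :
    ∑ k ∈ range N, unitRoot N ^ ((k : ℤ) * m) = if m = 0 then (N : ℂ) else 0 := by
  have hprim := isPrimitiveRoot_unitRoot hN
  simp_rw [mul_comm _ m, zpow_mul, zpow_natCast]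
  split_ifs with hm0
  · simp [hm0]
  have hne : unitRoot N ^ m ≠ 1 := fun h =>
    hm0 (Int.eq_zero_of_abs_lt_dvd ((hprim.zpow_eq_one_iff_dvd m).1 h) hm)
  rw [geom_sum_eq hne, ← zpow_natCast, ← zpow_mul, mul_comm, zpow_mul, zpow_natCast,
    hprim.pow_eq_one, one_zpow, sub_self, zero_div]

end RootOfUnity

lemma sum_Icc_neg_eq_sum_range_of_periodic {M : Type*} [AddCommMonoid M] {P N : ℕ}
    (hPN : 2 * P < N) {f : ℤ → M} (hf : Function.Periodic f N)
    (hgap : ∀ k : ℤ, P < k → k < N - P → f k = 0) :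
    ∑ p ∈ Icc (-P : ℤ) P, f p = ∑ k ∈ range N, f k := by
  rw [← sum_filter_of_ne (p := fun k : ℕ => k ≤ P ∨ N - P ≤ k) fun k _ hk => by
    by_contra h
    exact hk (hgap k (by omega) (by omega))]
  refine sum_nbij' (fun p => (if p < 0 then p + N else p).toNat)
    (fun k => if k ≤ P then (k : ℤ) else k - N) ?_ ?_ ?_ ?_ ?_
  · intro p hp
    simp only [mem_Icc, mem_filter, mem_range] at hp ⊢
    split_ifs <;> omega
  · intro k hk
    simp only [mem_Icc, mem_filter, mem_range] at hk ⊢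
    split_ifs <;> omega
  · intro p hp
    simp only [mem_Icc] at hp
    split_ifs <;> omega
  · intro k hk
    simp only [mem_filter, mem_range] at hk
    split_ifs <;> omega
  · intro p hp
    simp only [mem_Icc] at hp
    split_ifs with hp0
    · rw [Int.toNat_of_nonneg (by omega), hf]
    · rw [Int.toNat_of_nonneg (by omega)]

section DFT

variable {N : ℕ}

noncomputable def dft (y : Fin N → ℂ) (k : ℤ) : ℂ :=
  ∑ n : Fin N, y n * unitRoot N ^ (-((n : ℤ) * k))

lemma dft_eq_sum_pow (y : Fin N → ℂ) (k : ℤ) :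
    dft y k = ∑ n : Fin N, y n * (unitRoot N ^ (-k)) ^ (n : ℕ) := by
  simp_rw [dft, ← zpow_natCast, ← zpow_mul, neg_mul_eq_mul_neg, mul_comm]

lemma dft_sub (y y' : Fin N → ℂ) (k : ℤ) : dft (y - y') k = dft y k - dft y' k := by
  simp only [dft, Pi.sub_apply, sub_mul, sum_sub_distrib]

lemma dft_periodic (y : Fin N → ℂ) : Function.Periodic (dft y) N := by
  intro k
  refine sum_congr rfl fun n _ => ?_
  rw [show -((n : ℤ) * (k + N)) = -(n * k) + N * (-n) by ring, unitRoot_zpow_add_mul]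

lemma conj_dft (hN : N ≠ 0) (y : Fin N → ℝ) (k : ℤ) :
    starRingEnd ℂ (dft (fun n => y n) k) = dft (fun n => y n) (-k) := by
  simp [dft, conj_unitRoot_zpow hN]

lemma dft_const (hN : N ≠ 0) (c : ℂ) {k : ℤ} (hk : |k| < N) (hk0 : k ≠ 0) :
    dft (fun _ : Fin N => c) k = 0 := by
  simp_rw [dft, ← mul_sum, ← mul_neg]
  rw [Fin.sum_univ_eq_sum_range (fun n => unitRoot N ^ ((n : ℤ) * -k)),
    sum_range_unitRoot_zpow hN (by rwa [abs_neg]), if_neg (neg_ne_zero.2 hk0), mul_zero]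

lemma sum_dft_mul_unitRoot_zpow (hN : N ≠ 0) (y : Fin N → ℂ) (m : Fin N) :
    ∑ k ∈ range N, dft y k * unitRoot N ^ ((m : ℤ) * k) = N * y m := by
  have hinner : ∀ n : Fin N,
      ∑ k ∈ range N, unitRoot N ^ ((k : ℤ) * ((m : ℤ) - n)) = if n = m then (N : ℂ) else 0 := by
    intro n
    rw [sum_range_unitRoot_zpow hN (by rw [abs_lt]; omega)]
    simp only [sub_eq_zero, Nat.cast_inj, Fin.val_inj, eq_comm]
  calc ∑ k ∈ range N, dft y k * unitRoot N ^ ((m : ℤ) * k)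
      = ∑ n : Fin N, y n * ∑ k ∈ range N, unitRoot N ^ ((k : ℤ) * ((m : ℤ) - n)) := by
        simp_rw [dft, sum_mul, mul_sum]
        rw [sum_comm]
        refine sum_congr rfl fun n _ => sum_congr rfl fun k _ => ?_
        rw [mul_assoc, ← zpow_add₀ unitRoot_ne_zero]
        ring_nf
    _ = N * y m := by simp [hinner, mul_comm]

lemma eq_dft_zero_div_of_dft_eq_zero (hN : N ≠ 0) (y : Fin N → ℂ)
    (h : ∀ k : ℕ, 0 < k → k < N → dft y k = 0) (m : Fin N) : y m = dft y 0 / N := by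
  have hinv := sum_dft_mul_unitRoot_zpow hN y m
  rw [sum_eq_single 0 (fun k hk hk0 => by rw [h k (by omega) (mem_range.1 hk), zero_mul])
    (by simp [Nat.pos_of_ne_zero hN])] at hinv
  rw [eq_div_iff (Nat.cast_ne_zero.2 hN), mul_comm, ← hinv]
  simp

end DFT

section PBL

variable {P N : ℕ}

lemma exp_mul_div_eq_unitRoot_zpow (n : ℕ) (p : ℤ) :
    exp (2 * Real.pi * I * n * p / N) = unitRoot N ^ ((n : ℤ) * p) := by
  rw [← exp_eq_unitRoot_zpow]
  push_cast
  ring_nf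

lemma IsPBLSample.dft_eq_zero (hN : N ≠ 0) {y : Fin N → ℝ} (hy : IsPBLSample P N y) {k : ℤ}
    (hk : P < k) (hk' : k < N - P) : dft (fun n => y n) k = 0 := by
  obtain ⟨c, -, hc⟩ := hy
  calc dft (fun n => y n) k
      = ∑ p ∈ Icc (-P : ℤ) P, c p * ∑ n ∈ range N, unitRoot N ^ ((n : ℤ) * (p - k)) := by
        simp_rw [dft, hc, exp_mul_div_eq_unitRoot_zpow, sum_mul, mul_sum]
        rw [sum_comm]
        refine sum_congr rfl fun p _ => ?_
        rw [← Fin.sum_univ_eq_sum_range (fun n => c p * unitRoot N ^ ((n : ℤ) * (p - k)))]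
        refine sum_congr rfl fun n _ => ?_
        rw [mul_assoc, ← zpow_add₀ unitRoot_ne_zero]
        ring_nf
    _ = 0 := sum_eq_zero fun p hp => by
        rw [mem_Icc] at hp
        rw [sum_range_unitRoot_zpow hN (by rw [abs_lt]; omega), if_neg (by omega), mul_zero]

lemma isPBLSample_of_dft_eq_zero (hN : 2 * P < N) {y : Fin N → ℝ}
    (hgap : ∀ k : ℤ, P < k → k < N - P → dft (fun n => y n) k = 0) : IsPBLSample P N y := by
  have hN0 : N ≠ 0 := by omega
  refine ⟨fun p => dft (fun n => y n) p / N,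
    fun p => by rw [map_div₀, conj_dft hN0, map_natCast], fun m => ?_⟩
  simp_rw [exp_mul_div_eq_unitRoot_zpow]
  rw [sum_Icc_neg_eq_sum_range_of_periodic hN
    (f := fun p => dft (fun n => y n) p / N * unitRoot N ^ ((m : ℤ) * p))]
  · simp_rw [div_mul_eq_mul_div, ← sum_div, sum_dft_mul_unitRoot_zpow hN0]
    exact (mul_div_cancel_left₀ _ (Nat.cast_ne_zero.2 hN0)).symm
  · intro p
    simp only
    rw [dft_periodic, mul_add, mul_comm _ (N : ℤ), unitRoot_zpow_add_mul]
  · intro k hk hk'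
    rw [hgap k hk hk', zero_div, zero_mul]

lemma isPBLSample_iff (hN : 2 * P < N) (y : Fin N → ℝ) :
    IsPBLSample P N y ↔ ∀ k : ℤ, P < k → k < N - P → dft (fun n => y n) k = 0 :=
  ⟨fun hy _ hk hk' => hy.dft_eq_zero (by omega) hk hk', isPBLSample_of_dft_eq_zero hN⟩

end PBL

lemma IsPrimitiveRoot.aeval_eq_zero_of_aeval_eq_zero {K : Type*} [Field K] [CharZero K] {d : ℕ}
    (hd : 0 < d) {ζ ξ : K} (hζ : IsPrimitiveRoot ζ d) (hξ : IsPrimitiveRoot ξ d) {F : ℤ[X]}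
    (h : aeval ζ F = 0) : aeval ξ F = 0 := by
  rw [minpoly.isIntegrallyClosed_dvd_iff (hξ.isIntegral hd), ← cyclotomic_eq_minpoly hξ hd,
    cyclotomic_eq_minpoly hζ hd]
  exact minpoly.isIntegrallyClosed_dvd (hζ.isIntegral hd) h

section IntegerVectors

variable {N : ℕ}

noncomputable def vecPoly (a : Fin N → ℤ) : ℤ[X] := ∑ n : Fin N, monomial n (a n)

lemma vecPoly_coeff (g : ℤ[X]) (hg : g.natDegree < N) :
    vecPoly (fun n : Fin N => g.coeff n) = g := by
  rw [vecPoly, Fin.sum_univ_eq_sum_range (fun n => monomial n (g.coeff n)), ← as_sum_range' g N hg]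

lemma dft_intCast_eq_aeval (a : Fin N → ℤ) (k : ℤ) :
    dft (fun n => (a n : ℂ)) k = aeval (unitRoot N ^ (-k)) (vecPoly a) := by
  simp [vecPoly, dft_eq_sum_pow, aeval_monomial]

end IntegerVectors

section Cofactor

noncomputable def cyclotomicCofactor (N d : ℕ) : ℤ[X] := ∏ e ∈ N.divisors.erase d, cyclotomic e ℤ

variable {N d : ℕ}

lemma cyclotomic_mul_cyclotomicCofactor (hN : N ≠ 0) (hdN : d ∣ N) :
    cyclotomic d ℤ * cyclotomicCofactor N d = X ^ N - 1 := by
  rw [cyclotomicCofactor, mul_prod_erase _ (fun e => cyclotomic e ℤ) (Nat.mem_divisors.2 ⟨hdN, hN⟩),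
    prod_cyclotomic_eq_X_pow_sub_one (Nat.pos_of_ne_zero hN)]

lemma natDegree_cyclotomicCofactor_lt (hN : N ≠ 0) (hdN : d ∣ N) :
    (cyclotomicCofactor N d).natDegree < N := by
  have hmonic : (cyclotomicCofactor N d).Monic :=
    monic_prod_of_monic _ _ fun e _ => cyclotomic.monic e ℤ
  have h := congrArg natDegree (cyclotomic_mul_cyclotomicCofactor hN hdN)
  rw [(cyclotomic.monic d ℤ).natDegree_mul hmonic, natDegree_cyclotomic,
    ← C_1, natDegree_X_pow_sub_C] at h
  have := Nat.totient_pos.2 (Nat.pos_of_dvd_of_pos hdN (Nat.pos_of_ne_zero hN))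
  omega

lemma aeval_cyclotomic_int (e : ℕ) (ξ : ℂ) :
    aeval ξ (cyclotomic e ℤ) = eval ξ (cyclotomic e ℂ) := by
  rw [aeval_def, eval₂_eq_eval_map, map_cyclotomic]

lemma aeval_cyclotomicCofactor_eq_zero (hN : N ≠ 0) (hdN : d ∣ N) {ξ : ℂ} (hξN : ξ ^ N = 1)
    (hξ : ¬ IsPrimitiveRoot ξ d) : aeval ξ (cyclotomicCofactor N d) = 0 := by
  have h := congrArg (aeval ξ) (cyclotomic_mul_cyclotomicCofactor hN hdN)
  rw [map_mul, map_sub, map_pow, aeval_X, map_one, hξN, sub_self] at h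
  refine (mul_eq_zero.1 h).resolve_left fun h0 => hξ ?_
  have : NeZero d := ⟨fun hd => hN (Nat.eq_zero_of_zero_dvd (hd ▸ hdN))⟩
  rw [← isRoot_cyclotomic_iff, IsRoot, ← aeval_cyclotomic_int, h0]

lemma aeval_cyclotomicCofactor_ne_zero {ξ : ℂ} (hξ : IsPrimitiveRoot ξ d) :
    aeval ξ (cyclotomicCofactor N d) ≠ 0 := by
  rw [cyclotomicCofactor, map_prod]
  refine prod_ne_zero_iff.2 fun e he h0 => ?_
  rw [mem_erase, Nat.mem_divisors] at he
  have : NeZero e := ⟨fun h => he.2.2 (Nat.eq_zero_of_zero_dvd (h ▸ he.2.1))⟩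
  rw [aeval_cyclotomic_int, ← IsRoot, isRoot_cyclotomic_iff] at h0
  exact he.1 (h0.unique hξ)

end Cofactor

def HasPrimitiveRootInGap (P N d : ℕ) : Prop :=
  ∃ n, P + 1 ≤ n ∧ n ≤ N - P - 1 ∧ IsPrimitiveRoot (unitRoot N ^ n) d

section Identifiability

variable {P N : ℕ}

lemma dft_intCast_eq_zero_of_forall_hasPrimitiveRootInGap (hN : 2 * P < N)
    (hcyc : ∀ d, d ∣ N → 1 < d → HasPrimitiveRootInGap P N d)
    {a : Fin N → ℤ} (hgap : ∀ k : ℤ, P < k → k < N - P → dft (fun n => (a n : ℂ)) k = 0)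
    {k : ℕ} (hk : 0 < k) (hkN : k < N) : dft (fun n => (a n : ℂ)) k = 0 := by
  have hprim := isPrimitiveRoot_unitRoot (show N ≠ 0 by omega)
  set ξ := unitRoot N ^ (-(k : ℤ))
  have hξ1 : ξ ≠ 1 := fun h => by
    have := Int.eq_zero_of_abs_lt_dvd ((hprim.zpow_eq_one_iff_dvd _).1 h) (by rw [abs_lt]; omega)
    omega
  have hdN : orderOf ξ ∣ N := orderOf_dvd_of_pow_eq_one (unitRoot_zpow_pow_eq_one _)
  have hd : 1 < orderOf ξ := by
    have := Nat.pos_of_dvd_of_pos hdN (by omega)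
    have := mt orderOf_eq_one_iff.1 hξ1
    omega
  obtain ⟨n, hn, hn', hζ⟩ := hcyc _ hdN hd
  have hroot := hgap n (by omega) (by omega)
  rw [dft_intCast_eq_aeval, zpow_neg, zpow_natCast] at hroot
  rw [dft_intCast_eq_aeval]
  exact hζ.inv.aeval_eq_zero_of_aeval_eq_zero (by omega) (IsPrimitiveRoot.orderOf ξ) hroot

lemma pblIdentifiable_of_forall_hasPrimitiveRootInGap (hN : 2 * P < N)
    (hcyc : ∀ d, d ∣ N → 1 < d → HasPrimitiveRootInGap P N d) :
    PBLIdentifiable P N := by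
  intro y y' hy hy' hint
  choose a ha using hint
  have hgap : ∀ k : ℤ, P < k → k < N - P → dft (fun n => (a n : ℂ)) k = 0 := by
    intro k hk hk'
    have hdiff : (fun n => (a n : ℂ)) = (fun n => (y n : ℂ)) - fun n => (y' n : ℂ) := by
      ext n
      simp only [Pi.sub_apply]
      exact_mod_cast (ha n).symm
    rw [hdiff, dft_sub, (isPBLSample_iff hN y).1 hy k hk hk',
      (isPBLSample_iff hN y').1 hy' k hk hk', sub_zero]
  have hconst := eq_dft_zero_div_of_dft_eq_zero (by omega) _
    fun k hk hkN => dft_intCast_eq_zero_of_forall_hasPrimitiveRootInGap hN hcyc hgap hk hkN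
  refine ⟨a ⟨0, by omega⟩, fun n => ?_⟩
  rw [ha n]
  exact_mod_cast (hconst n).trans (hconst _).symm

lemma hasPrimitiveRootInGap_of_pblIdentifiable (hN : 2 * P < N) (hid : PBLIdentifiable P N)
    {d : ℕ} (hdN : d ∣ N) (hd : 1 < d) : HasPrimitiveRootInGap P N d := by
  by_contra hcon
  have hN0 : N ≠ 0 := by omega
  set g := cyclotomicCofactor N d
  have hdft (k : ℤ) :
      dft (fun n : Fin N => ((g.coeff n : ℤ) : ℂ)) k = aeval (unitRoot N ^ (-k)) g := by
    rw [dft_intCast_eq_aeval, vecPoly_coeff g (natDegree_cyclotomicCofactor_lt hN0 hdN)]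
  have hPBL : IsPBLSample P N fun n => (g.coeff n : ℝ) := by
    refine isPBLSample_of_dft_eq_zero hN fun k hk hk' => ?_
    push_cast
    rw [hdft]
    refine aeval_cyclotomicCofactor_eq_zero hN0 hdN (unitRoot_zpow_pow_eq_one _) fun hξ => ?_
    refine hcon ⟨k.toNat, by omega, by omega, ?_⟩
    rw [← zpow_natCast, Int.toNat_of_nonneg (by omega)]
    simpa using hξ.inv
  obtain ⟨c, hc⟩ := hid _ 0 hPBL ⟨0, by simp, by simp⟩ fun n => ⟨g.coeff n, by simp⟩
  have hconst : (fun n : Fin N => ((g.coeff n : ℤ) : ℂ)) = fun _ => (c : ℂ) :=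
    funext fun n => by exact_mod_cast (sub_zero (g.coeff n : ℝ)).symm.trans (hc n)
  have hζ : IsPrimitiveRoot (unitRoot N ^ (-((N / d : ℕ) : ℤ))) d := by
    rw [zpow_neg, zpow_natCast]
    exact ((isPrimitiveRoot_unitRoot hN0).pow (by omega) (Nat.div_mul_cancel hdN).symm).inv
  have hq : 0 < N / d ∧ N / d < N :=
    ⟨Nat.div_pos (Nat.le_of_dvd (by omega) hdN) (by omega), Nat.div_lt_self (by omega) hd⟩
  apply aeval_cyclotomicCofactor_ne_zero hζ
  rw [← hdft, hconst, dft_const hN0 _ (by rw [Nat.abs_cast]; omega) (by omega)]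

lemma pblIdentifiable_iff_forall_hasPrimitiveRootInGap (hN : 2 * P < N) :
    PBLIdentifiable P N ↔ ∀ d, d ∣ N → 1 < d → HasPrimitiveRootInGap P N d :=
  ⟨fun hid _ hdN hd => hasPrimitiveRootInGap_of_pblIdentifiable hN hid hdN hd,
    pblIdentifiable_of_forall_hasPrimitiveRootInGap hN⟩

end Identifiability

theorem stmt12_general (P N : ℕ) (hN : 2 * P + 1 < N) :
    PBLIdentifiable P N ↔
      ∀ d : ℕ, d ∣ N → 1 < d →
        ∃ n : ℕ, P + 1 ≤ n ∧ n ≤ N - P - 1 ∧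
          (Polynomial.cyclotomic d ℂ).IsRoot
            (Complex.exp (2 * Real.pi * Complex.I * n / N)) := by
  have hroot {d : ℕ} (hd : 1 < d) (n : ℕ) :
      (cyclotomic d ℂ).IsRoot (exp (2 * Real.pi * I * n / N)) ↔
        IsPrimitiveRoot (unitRoot N ^ n) d := by
    have : NeZero d := ⟨by omega⟩
    rw [exp_eq_unitRoot_pow, isRoot_cyclotomic_iff]
  rw [pblIdentifiable_iff_forall_hasPrimitiveRootInGap (by omega)]
  refine forall₂_congr fun d _ => forall_congr' fun hd => ?_
  simp only [HasPrimitiveRootInGap, hroot hd]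

/-- the PBL samples are identifiable up to an integer constant vector iff
for every divisor d > 1 of N there is n with P+1 ≤ n ≤ N−P−1 such that e^{2πin/N} is a
root of the d-th cyclotomic polynomial. -/
theorem stmt12 (P N : ℕ) (hP : 1 ≤ P) (hN : 2 * P + 1 < N) :
    PBLIdentifiable P N ↔
      ∀ d : ℕ, d ∣ N → 1 < d →
        ∃ n : ℕ, P + 1 ≤ n ∧ n ≤ N - P - 1 ∧
          (Polynomial.cyclotomic d ℂ).IsRoot
            (Complex.exp (2 * Real.pi * Complex.I * n / N)) :=
  stmt12_general P N hN
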